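/- arXiv:math/0503556 — 3 statements merged into one kernel-verified Lean document; each statement's English description precedes it below -/
import Mathlib

section
/- For Hermite polynomials He_n defined by He_n(x) = Σ_{i=0}^{⌊n/2⌋} (-1)^i n! x^{n-2i} / ((n-2i)! i! 2^i), the square admits the expansion (He_n(x))^2 = (n!)^2 Σ_{i=0}^{n} He_{2i}(x) / ((i!)^2 (n-i)!). -/
/-!
`He n x` is the value at `x` of Mathlib's `Polynomial.hermite n`: compare coefficients with
`Polynomial.coeff_hermite_explicit`. Writing `H n = hermite n`, `hermite_succ` gives
`(H (n + 1))' = (n + 1) H n` and hence `X * H n = H (n + 1) + n H (n - 1)`. Induction on `m`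
with this recurrence proves the linearization formula
`H m * H n = ∑ k, k! C(m, k) C(n, k) H (m + n - 2k)`, and for `m = n` the substitution
`k ↦ n - k` turns it into the expansion of `He n x ^ 2`.
-/

open Finset

/-- Probabilists' Hermite polynomial, via its explicit sum formula. -/
noncomputable def He (n : ℕ) (x : ℝ) : ℝ :=
  ∑ i ∈ Finset.range (n / 2 + 1),
    (-1 : ℝ) ^ i * (Nat.factorial n : ℝ) * x ^ (n - 2 * i) /
      ((Nat.factorial (n - 2 * i) : ℝ) * (Nat.factorial i : ℝ) * 2 ^ i)

open Polynomial Nat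

theorem Nat.factorial_two_mul (i : ℕ) : (2 * i)! = 2 ^ i * i ! * (2 * i - 1)‼ := by
  cases i with
  | zero => rfl
  | succ i =>
    rw [show 2 * (i + 1) = (2 * i + 1) + 1 by ring, factorial_eq_mul_doubleFactorial,
      show 2 * i + 1 + 1 = 2 * (i + 1) by ring, doubleFactorial_two_mul]
    rfl

theorem Finset.sum_range_succ_eq_sum_sub_two_mul {M : Type*} [AddCommMonoid M] (n : ℕ)
    (f : ℕ → M) (hf : ∀ k, Odd (n + k) → f k = 0) :
    ∑ k ∈ range (n + 1), f k = ∑ i ∈ range (n / 2 + 1), f (n - 2 * i) := by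
  classical
  rw [← sum_image (g := fun i => n - 2 * i) fun i hi j hj hij => by
    simp only [coe_range, Set.mem_Iio] at hi hj hij; omega]
  refine (sum_subset (fun k hk => ?_) fun k hk hk' => hf k ?_).symm
  · obtain ⟨i, -, rfl⟩ := mem_image.1 hk
    exact mem_range.2 (by omega)
  · refine Nat.not_even_iff_odd.1 fun ⟨r, hr⟩ => hk' (mem_image.2 ⟨(n - k) / 2, ?_, ?_⟩)
    · simp only [mem_range] at hk ⊢; omega
    · simp only [mem_range] at hk ⊢; omega

namespace Polynomial

theorem derivative_hermite_succ (n : ℕ) :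
    derivative (hermite (n + 1)) = (n + 1 : ℤ[X]) * hermite n := by
  induction n with
  | zero => simp
  | succ n ih =>
    rw [hermite_succ (n + 1), derivative_sub, derivative_mul, ih, derivative_mul,
      hermite_succ n]
    simp only [derivative_X, derivative_natCast, derivative_add, derivative_one]
    push_cast
    ring

theorem hermite_add_two (n : ℕ) :
    hermite (n + 2) = X * hermite (n + 1) - (n + 1 : ℤ[X]) * hermite n := by
  rw [hermite_succ (n + 1), derivative_hermite_succ]

theorem X_mul_hermite (n : ℕ) :
    X * hermite n = hermite (n + 1) + (n : ℤ[X]) * hermite (n - 1) := by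
  cases n with
  | zero => simp
  | succ n => rw [hermite_add_two]; push_cast; ring

def hermiteLinCoeff (m n k : ℕ) : ℕ := k ! * m.choose k * n.choose k

@[simp]
theorem hermiteLinCoeff_zero_right (m n : ℕ) : hermiteLinCoeff m n 0 = 1 := by
  simp [hermiteLinCoeff]

theorem hermiteLinCoeff_eq_zero_of_lt {m n k : ℕ} (h : m < k) : hermiteLinCoeff m n k = 0 := by
  simp [hermiteLinCoeff, Nat.choose_eq_zero_of_lt h]

theorem le_of_hermiteLinCoeff_ne_zero {m n k : ℕ} (h : hermiteLinCoeff m n k ≠ 0) :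
    k ≤ m ∧ k ≤ n := by
  simp only [hermiteLinCoeff, ne_eq, mul_eq_zero, Nat.choose_eq_zero_iff, not_or, not_lt] at h
  exact ⟨h.1.2, h.2⟩

theorem hermiteLinCoeff_add_two_succ (m n k : ℕ) :
    hermiteLinCoeff (m + 2) n (k + 1) + (m + 1) * hermiteLinCoeff m n k =
      hermiteLinCoeff (m + 1) n (k + 1) + hermiteLinCoeff (m + 1) n k * (m + 1 + n - 2 * k) := by
  have hpascal := Nat.choose_succ_succ (m + 1) k
  have hn := Nat.choose_succ_right_eq n k
  have hm := Nat.choose_mul_succ_eq m k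
  have hsub : (m + 1).choose k * n.choose k * ((n - k) + (m + 1 - k)) =
      (m + 1).choose k * n.choose k * (m + 1 + n - 2 * k) := by
    by_cases hk : k ≤ n ∧ k ≤ m + 1
    · congr 1; omega
    · rcases not_and_or.1 hk with hk | hk <;> simp [Nat.choose_eq_zero_of_lt (not_le.1 hk)]
  simp only [hermiteLinCoeff, Nat.factorial_succ, hpascal]
  zify at hn hm hsub ⊢
  linear_combination (k ! : ℤ) * ((m + 1).choose k * hn + n.choose k * hm + hsub)

/-- The factor `hermiteLinCoeff m n k` vanishes when `2 * k > m + n`, the case in which the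
truncated subtraction `m + n - 2 * k + 1 = m + 1 + n - 2 * k` would fail. -/
theorem hermiteLinCoeff_mul_X_mul_hermite (m n k : ℕ) :
    (hermiteLinCoeff m n k : ℤ[X]) * (X * hermite (m + n - 2 * k)) =
      (hermiteLinCoeff m n k : ℤ[X]) * (hermite (m + 1 + n - 2 * k) +
        ((m + n - 2 * k : ℕ) : ℤ[X]) * hermite (m + n - 2 * k - 1)) := by
  rcases eq_or_ne (hermiteLinCoeff m n k) 0 with h | h
  · simp [h]
  · obtain ⟨hm, hn⟩ := le_of_hermiteLinCoeff_ne_zero h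
    rw [X_mul_hermite, show m + n - 2 * k + 1 = m + 1 + n - 2 * k by omega]

theorem X_mul_sum_hermiteLinCoeff (m n M : ℕ) (hM : m < M) :
    X * ∑ k ∈ range (M + 1), (hermiteLinCoeff m n k : ℤ[X]) * hermite (m + n - 2 * k) =
      hermite (m + 1 + n) + ∑ k ∈ range M,
        ((hermiteLinCoeff m n (k + 1) : ℤ[X]) +
          hermiteLinCoeff m n k * ((m + n - 2 * k : ℕ) : ℤ[X])) *
          hermite (m + n - 2 * k - 1) := by
  have hshift (k : ℕ) : m + 1 + n - 2 * (k + 1) = m + n - 2 * k - 1 := by omega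
  have hterm (k : ℕ) : X * ((hermiteLinCoeff m n k : ℤ[X]) * hermite (m + n - 2 * k)) =
      (hermiteLinCoeff m n k : ℤ[X]) * hermite (m + 1 + n - 2 * k) +
        (hermiteLinCoeff m n k : ℤ[X]) * ((m + n - 2 * k : ℕ) : ℤ[X]) *
          hermite (m + n - 2 * k - 1) := by
    rw [mul_left_comm, hermiteLinCoeff_mul_X_mul_hermite]
    ring
  rw [mul_sum]
  simp only [hterm, sum_add_distrib]
  rw [sum_range_succ', sum_range_succ _ M, hermiteLinCoeff_eq_zero_of_lt hM]
  simp only [hshift, hermiteLinCoeff_zero_right, Nat.cast_zero, Nat.cast_one, zero_mul, one_mul,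
    add_zero, add_mul, sum_add_distrib, Nat.mul_zero, Nat.sub_zero]
  ring

/-- Stated for every bound `N > m` (the coefficients vanish for `k > m`), so that the induction
needs no bookkeeping of summation ranges. -/
theorem hermite_mul_hermite_eq_sum (m n N : ℕ) (hN : m < N) :
    hermite m * hermite n =
      ∑ k ∈ range N, (hermiteLinCoeff m n k : ℤ[X]) * hermite (m + n - 2 * k) := by
  induction m using Nat.twoStepInduction generalizing N with
  | zero =>
    rw [sum_eq_single_of_mem 0 (mem_range.2 hN) fun k _ hk => by
      rw [hermiteLinCoeff_eq_zero_of_lt (by omega), Nat.cast_zero, zero_mul]]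
    simp
  | one =>
    obtain ⟨M, rfl⟩ : ∃ M, N = M + 2 := ⟨N - 2, by omega⟩
    rw [sum_range_succ', sum_range_succ', sum_eq_zero fun k _ => by
      rw [hermiteLinCoeff_eq_zero_of_lt (by omega), Nat.cast_zero, zero_mul]]
    rw [hermite_one, X_mul_hermite, show 1 + n - 2 * 1 = n - 1 by omega]
    simp [hermiteLinCoeff, add_comm]
  | more m ih ih1 =>
    obtain ⟨M, rfl⟩ : ∃ M, N = M + 1 := ⟨N - 1, by omega⟩
    have hshift (k : ℕ) : m + 1 + n - 2 * k - 1 = m + n - 2 * k := by omega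
    calc hermite (m + 2) * hermite n
        = X * (hermite (m + 1) * hermite n) - (m + 1 : ℤ[X]) * (hermite m * hermite n) := by
          rw [hermite_add_two]; ring
      _ = hermite (m + 2 + n) + ∑ k ∈ range M,
            ((hermiteLinCoeff (m + 1) n (k + 1) : ℤ[X]) +
              hermiteLinCoeff (m + 1) n k * ((m + 1 + n - 2 * k : ℕ) : ℤ[X]) -
              (m + 1 : ℤ[X]) * hermiteLinCoeff m n k) * hermite (m + n - 2 * k) := by
          rw [ih1 (M + 1) (by omega), ih M (by omega), X_mul_sum_hermiteLinCoeff _ _ _ (by omega)]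
          simp only [hshift, sub_mul, sum_sub_distrib, mul_sum, mul_assoc]
          ring
      _ = ∑ k ∈ range (M + 1),
            (hermiteLinCoeff (m + 2) n k : ℤ[X]) * hermite (m + 2 + n - 2 * k) := by
          rw [sum_range_succ', add_comm]
          congr 1
          · refine sum_congr rfl fun k _ => ?_
            rw [show m + 2 + n - 2 * (k + 1) = m + n - 2 * k by omega]
            congr 1
            have := congrArg (Nat.cast (R := ℤ[X])) (hermiteLinCoeff_add_two_succ m n k)
            push_cast at this
            linear_combination -this
          · simp

theorem coeff_hermite_two_mul_add_mul_factorial (i k : ℕ) :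
    coeff (hermite (2 * i + k)) k * (k ! * i ! * 2 ^ i : ℕ) = (-1) ^ i * (2 * i + k)! := by
  rw [coeff_hermite_explicit, ← add_choose_mul_factorial_mul_factorial, Nat.factorial_two_mul]
  push_cast
  ring

theorem cast_hermiteLinCoeff_self_sub {K : Type*} [Field K] [CharZero K] {n i : ℕ} (h : i ≤ n) :
    (hermiteLinCoeff n n (n - i) : K) = (n ! : K) ^ 2 / ((i ! : K) ^ 2 * (n - i)!) := by
  rw [hermiteLinCoeff, choose_symm h, Nat.cast_mul, Nat.cast_mul, Nat.cast_choose K h]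
  field_simp

end Polynomial

theorem He_eq_aeval_hermite (n : ℕ) (x : ℝ) : He n x = aeval x (hermite n) := by
  have hodd (k : ℕ) (hk : Odd (n + k)) : (hermite n).coeff k • x ^ k = 0 := by
    rw [coeff_hermite_of_odd_add hk, zero_smul]
  rw [aeval_eq_sum_range, natDegree_hermite, sum_range_succ_eq_sum_sub_two_mul n _ hodd]
  refine sum_congr rfl fun i hi => ?_
  obtain ⟨k, rfl⟩ : ∃ k, n = 2 * i + k :=
    ⟨n - 2 * i, by simp only [mem_range] at hi; omega⟩
  rw [show 2 * i + k - 2 * i = k by omega, zsmul_eq_mul, div_eq_iff (by positivity)]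
  have := congrArg (Int.cast (R := ℝ)) (coeff_hermite_two_mul_add_mul_factorial i k)
  push_cast at this ⊢
  linear_combination -x ^ k * this

theorem hermite_square_expansion (n : ℕ) (x : ℝ) :
    (He n x) ^ 2 =
      ((Nat.factorial n : ℝ)) ^ 2 *
        ∑ i ∈ Finset.range (n + 1),
          He (2 * i) x / (((Nat.factorial i : ℝ)) ^ 2 * (Nat.factorial (n - i) : ℝ)) := by
  rw [He_eq_aeval_hermite, sq, ← map_mul,
    hermite_mul_hermite_eq_sum n n (n + 1) n.lt_succ_self, map_sum, mul_sum, ← sum_range_reflect]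
  refine sum_congr rfl fun i hi => ?_
  have hi : i ≤ n := by simp only [mem_range] at hi; omega
  rw [show n + 1 - 1 - i = n - i by omega, show n + n - 2 * (n - i) = 2 * i by omega, map_mul,
    map_natCast, ← He_eq_aeval_hermite, cast_hermiteLinCoeff_self_sub hi]
  ring
end

section
/- Fix ρ ≥ 1 and for each positive integer K let k*(K) be the index maximizing ρ^{-k} C(2k,k) C(K,k)^2 over 0 ≤ k ≤ K. Then k*(K)/K → 2/(2 + √ρ) as K → ∞. -/
open Finset Filter

/-- The summand `ρ^{-k} C(2k,k) C(K,k)²`. -/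
noncomputable def term (ρ : ℝ) (K k : ℕ) : ℝ :=
  ρ ^ (-(k : ℝ)) * (Nat.choose (2 * k) k : ℝ) * ((Nat.choose K k : ℝ)) ^ 2

lemma term_eq {ρ : ℝ} (hρ : 0 < ρ) (K k : ℕ) :
    term ρ K k = (ρ ^ k)⁻¹ * (Nat.choose (2 * k) k : ℝ) * ((Nat.choose K k : ℝ)) ^ 2 := by
  unfold term
  rw [Real.rpow_neg hρ.le, Real.rpow_natCast]

lemma term_pos {ρ : ℝ} (hρ : 0 < ρ) {K k : ℕ} (h : k ≤ K) : 0 < term ρ K k := by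
  rw [term_eq hρ]
  have h1 := Nat.choose_pos h
  have h2 := Nat.choose_pos (show k ≤ 2 * k by omega)
  positivity

lemma ratio_eq {ρ : ℝ} (hρ : 0 < ρ) {K k : ℕ} (hk : k < K) :
    term ρ K (k + 1) * (ρ * ((k : ℝ) + 1) ^ 3)
      = term ρ K k * (2 * (2 * (k : ℝ) + 1) * ((K : ℝ) - k) ^ 2) := by
  have h1 : ((k : ℝ) + 1) * ((2 * (k + 1)).choose (k + 1) : ℝ)
      = 2 * (2 * (k : ℝ) + 1) * ((2 * k).choose k : ℝ) := by
    have := Nat.succ_mul_centralBinom_succ k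
    simp only [Nat.centralBinom] at this
    exact_mod_cast this
  have h2 : ((K.choose (k + 1) : ℝ)) * ((k : ℝ) + 1)
      = (K.choose k : ℝ) * ((K : ℝ) - k) := by
    have := Nat.choose_succ_right_eq K k
    have hc : ((K - k : ℕ) : ℝ) = (K : ℝ) - k := by
      rw [Nat.cast_sub hk.le]
    calc ((K.choose (k + 1) : ℝ)) * ((k : ℝ) + 1)
        = ((K.choose (k + 1) * (k + 1) : ℕ) : ℝ) := by push_cast; ring
      _ = ((K.choose k * (K - k) : ℕ) : ℝ) := by rw [this]
      _ = (K.choose k : ℝ) * ((K : ℝ) - k) := by push_cast [hc]; ring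
  have e1 : (ρ ^ (k + 1))⁻¹ * ρ = (ρ ^ k)⁻¹ := by
    field_simp [pow_succ]
    ring
  rw [term_eq hρ, term_eq hρ]
  calc (ρ ^ (k + 1))⁻¹ * ((2 * (k + 1)).choose (k + 1) : ℝ) * ((K.choose (k + 1) : ℝ)) ^ 2
        * (ρ * ((k : ℝ) + 1) ^ 3)
      = ((ρ ^ (k + 1))⁻¹ * ρ) * ((((k : ℝ) + 1) * ((2 * (k + 1)).choose (k + 1) : ℝ))
          * (((K.choose (k + 1) : ℝ)) * ((k : ℝ) + 1)) ^ 2) := by ring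
    _ = (ρ ^ k)⁻¹ * ((2 * (2 * (k : ℝ) + 1) * ((2 * k).choose k : ℝ))
          * ((K.choose k : ℝ) * ((K : ℝ) - k)) ^ 2) := by rw [e1, h1, h2]
    _ = (ρ ^ k)⁻¹ * ((2 * k).choose k : ℝ) * ((K.choose k : ℝ)) ^ 2
          * (2 * (2 * (k : ℝ) + 1) * ((K : ℝ) - k) ^ 2) := by ring

set_option maxHeartbeats 2000000 in
lemma main_bound (ρ : ℝ) (hρ : 1 ≤ ρ) (K k : ℕ) (hK : (ρ : ℝ) < K) (hK1 : 1 ≤ K)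
    (hkK : k ≤ K) (hmax : ∀ j ≤ K, term ρ K j ≤ term ρ K k) :
    |(k : ℝ) / K - 2 / (2 + Real.sqrt ρ)| ≤ 4 * Real.sqrt ρ / K := by
  have hρ0 : (0 : ℝ) < ρ := lt_of_lt_of_le one_pos hρ
  set s := Real.sqrt ρ with hs
  have hs1 : 1 ≤ s := by
    rw [hs, show (1:ℝ) = Real.sqrt 1 by simp]
    exact Real.sqrt_le_sqrt hρ
  have hs2 : s ^ 2 = ρ := by rw [hs]; exact Real.sq_sqrt hρ0.le
  clear_value s
  have hK0 : (0 : ℝ) < K := by exact_mod_cast hK1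
  have hK1' : (1 : ℝ) ≤ K := by exact_mod_cast hK1
  -- inequality B : 2(2k+1)(K-k)^2 ≤ ρ(k+1)^3
  have hB : 2 * (2 * (k : ℝ) + 1) * ((K : ℝ) - k) ^ 2 ≤ ρ * ((k : ℝ) + 1) ^ 3 := by
    rcases eq_or_lt_of_le hkK with h | h
    · have : (K : ℝ) - k = 0 := by rw [h]; ring
      rw [this]
      have : (0:ℝ) < ρ * ((k : ℝ) + 1) ^ 3 := by positivity
      nlinarith
    · have hr := ratio_eq hρ0 h
      have h1 : term ρ K (k + 1) ≤ term ρ K k := hmax _ (by omega)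
      have hpos := term_pos hρ0 hkK
      have h2 := mul_le_mul_of_nonneg_right h1
        (show (0:ℝ) ≤ ρ * ((k : ℝ) + 1) ^ 3 by positivity)
      rw [hr] at h2
      nlinarith [h2, hpos]
  -- k ≥ 1
  have hk1 : 1 ≤ k := by
    by_contra h
    have hk0 : k = 0 := by omega
    subst hk0
    simp only [Nat.cast_zero, sub_zero] at hB
    nlinarith [hB, hK, hK0, hK1']
  -- inequality A : ρ k^3 ≤ 2(2k-1)(K-k+1)^2
  obtain ⟨m, rfl⟩ : ∃ m, k = m + 1 := ⟨k - 1, by omega⟩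
  have hmK : m < K := by omega
  have hA : ρ * ((m : ℝ) + 1) ^ 3 ≤ 2 * (2 * (m : ℝ) + 1) * ((K : ℝ) - m) ^ 2 := by
    have hr := ratio_eq hρ0 hmK
    have h1 : term ρ K m ≤ term ρ K (m + 1) := hmax _ (by omega)
    have hpos := term_pos hρ0 hkK
    have h2 := mul_le_mul_of_nonneg_right h1
      (show (0:ℝ) ≤ 2 * (2 * (m : ℝ) + 1) * ((K : ℝ) - m) ^ 2 by positivity)
    rw [← hr] at h2
    nlinarith [h2, hpos]
  set x : ℝ := (m : ℝ) + 1 with hx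
  clear_value x
  have hx1 : 1 ≤ x := by have : (0:ℝ) ≤ m := Nat.cast_nonneg m; linarith
  have hx0 : 0 < x := by linarith
  have hxK : x ≤ K := by
    have : ((m + 1 : ℕ) : ℝ) ≤ K := Nat.cast_le.mpr hkK
    push_cast at this; linarith
  have hm : (m : ℝ) = x - 1 := by rw [hx]; ring
  rw [hm] at hA
  push_cast at hB
  rw [show (m:ℝ) + 1 = x from hx.symm] at hB
  -- upper bound : (2+s) x ≤ 2K + 2
  have hup : (2 + s) * x ≤ 2 * K + 2 := by
    have h3 : ρ * x ^ 3 ≤ 4 * x * ((K : ℝ) - x + 1) ^ 2 := by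
      nlinarith [hA, sq_nonneg ((K:ℝ) - x + 1)]
    have h4 : x * ((s * x) ^ 2) ≤ x * ((2 * ((K : ℝ) - x + 1)) ^ 2) := by
      calc x * ((s * x) ^ 2) = ρ * x ^ 3 := by rw [← hs2]; ring
        _ ≤ 4 * x * ((K : ℝ) - x + 1) ^ 2 := h3
        _ = x * ((2 * ((K : ℝ) - x + 1)) ^ 2) := by ring
    have h4' : (s * x) ^ 2 ≤ (2 * ((K : ℝ) - x + 1)) ^ 2 :=
      le_of_mul_le_mul_left h4 hx0
    have h5 : s * x ≤ 2 * ((K : ℝ) - x + 1) := by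
      have hsx : 0 ≤ s * x := by positivity
      have hb : 0 ≤ 2 * ((K : ℝ) - x + 1) := by linarith
      have := Real.sqrt_le_sqrt h4'
      rwa [Real.sqrt_sq hsx, Real.sqrt_sq hb] at this
    linarith
  -- lower bound : 2K ≤ (2+s) x + 4 s
  have hlo : 2 * (K : ℝ) ≤ (2 + s) * x + 4 * s := by
    by_contra h
    push_neg at h
    have hd : s * x + 4 * s < 2 * ((K : ℝ) - x) := by linarith
    have hd0 : 0 ≤ s * x + 4 * s := by positivity
    have h6 : (s * x + 4 * s) ^ 2 < (2 * ((K : ℝ) - x)) ^ 2 := by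
      nlinarith [mul_self_lt_mul_self hd0 hd]
    have h7 : 4 * x * ((K : ℝ) - x) ^ 2 ≤ s ^ 2 * (x + 1) ^ 3 := by
      rw [hs2]
      linarith [hB, sq_nonneg ((K:ℝ) - x)]
    have hfac : (x + 1) ^ 3 ≤ x * (x + 4) ^ 2 := by nlinarith [hx1, sq_nonneg x]
    have h8 : s ^ 2 * (x + 1) ^ 3 ≤ x * (s * x + 4 * s) ^ 2 := by
      nlinarith [hfac, sq_nonneg s]
    have h9 : x * (s * x + 4 * s) ^ 2 < x * (2 * ((K : ℝ) - x)) ^ 2 :=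
      mul_lt_mul_of_pos_left h6 hx0
    nlinarith [h7, h8, h9]
  -- conclude
  have hcast : (((m + 1 : ℕ)) : ℝ) = x := by push_cast; rw [hx]
  rw [hcast]
  have h2s : (0:ℝ) < 2 + s := by linarith
  rw [abs_sub_le_iff]
  constructor
  · rw [div_sub_div _ _ hK0.ne' h2s.ne', div_le_div_iff₀ (by positivity) hK0]
    nlinarith [mul_le_mul_of_nonneg_right hup hK0.le, hK0, hs1,
      mul_le_mul_of_nonneg_right hs1 hK0.le,
      mul_nonneg (mul_nonneg (by linarith : (0:ℝ) ≤ s) hK0.le) (by linarith : (0:ℝ) ≤ 1 + s)]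
  · rw [div_sub_div _ _ h2s.ne' hK0.ne', div_le_div_iff₀ (by positivity) hK0]
    nlinarith [mul_le_mul_of_nonneg_right
        (show 2 * (K:ℝ) - (2 + s) * x ≤ 4 * s by linarith) hK0.le, hK0, hs1,
      mul_nonneg (mul_nonneg (by linarith : (0:ℝ) ≤ 4 * s) hK0.le) (by linarith : (0:ℝ) ≤ 1 + s)]

theorem argmax_ratio_tendsto (ρ : ℝ) (hρ : 1 ≤ ρ) (kstar : ℕ → ℕ)
    (hmax : ∀ K : ℕ, 1 ≤ K → kstar K ≤ K ∧ ∀ k ≤ K, term ρ K k ≤ term ρ K (kstar K)) :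
    Tendsto (fun K : ℕ => (kstar K : ℝ) / (K : ℝ)) atTop
      (nhds (2 / (2 + Real.sqrt ρ))) := by
  set L : ℝ := 2 / (2 + Real.sqrt ρ) with hL
  have h0 : Tendsto (fun K : ℕ => (4 * Real.sqrt ρ) / (K : ℝ)) atTop (nhds 0) :=
    tendsto_const_div_atTop_nhds_zero_nat _
  have hev : ∀ᶠ K : ℕ in atTop, ‖(kstar K : ℝ) / K - L‖ ≤ 4 * Real.sqrt ρ / K := by
    filter_upwards [eventually_ge_atTop 1, eventually_gt_atTop (⌈ρ⌉₊)] with K hK1 hK2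
    have hKρ : (ρ : ℝ) < K := lt_of_le_of_lt (Nat.le_ceil ρ) (by exact_mod_cast hK2)
    obtain ⟨h1, h2⟩ := hmax K hK1
    simpa [Real.norm_eq_abs] using main_bound ρ hρ K (kstar K) hKρ hK1 h1 h2
  have hsub : Tendsto (fun K : ℕ => (kstar K : ℝ) / K - L) atTop (nhds 0) :=
    squeeze_zero_norm' hev h0
  have := hsub.add (tendsto_const_nhds : Tendsto (fun _ : ℕ => L) atTop (nhds L))
  simpa using this
end

section
/- For t > 0 and positive integer K, the inverse of the (K+1)×(K+1) matrix Ψ(t) with entries e^{(i-1)(j-1)t} satisfies ‖Ψ(t)^{-1}‖_F ≤ C(t)^{-1} K (K+1) (e^t/(e^t − 1))^K, where C(t) = exp(−2e/(e^t − 1)^2) and ‖·‖_F is the Frobenius norm. -/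
open Finset Matrix

/-- The `(K+1)×(K+1)` matrix with entries `e^{(i-1)(j-1)t}` (1-indexed). -/
noncomputable def Psi (t : ℝ) (K : ℕ) : Matrix (Fin (K + 1)) (Fin (K + 1)) ℝ :=
  Matrix.of fun i j : Fin (K + 1) => Real.exp ((i : ℝ) * (j : ℝ) * t)

/-!
`Ψ(t)` is the Vandermonde matrix of the nodes `q ^ i`, `q = e^t`, so the columns of `Ψ(t)⁻¹`
are the coefficient vectors of the Lagrange basis polynomials. The Frobenius norm is at most the
entrywise `ℓ¹` norm, and the coefficients of `∏_{m ≠ j} (X - q^m)` are dominated by those of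
`∏_{m ≠ j} (X + q^m)`, whose sum is `∏_{m ≠ j} (1 + q^m)`. Each factor
`(1 + q^m) / |q^j - q^m|` is at most `q/(q-1) · (1 + q^{-m}) · q^{-(j-m)}`, and summing over `j`
with geometric series gives `(q/(q-1))^K · e^u (1 + 2u)` with `u = 1/(q-1)`. Finally
`e^u (1 + 2u) ≤ e^{3u} ≤ 2 e^{2 e u²}` because `8 e log 2 > 9`.
-/

open Polynomial

theorem Matrix.sqrt_sum_sum_sq_le_sum_sum_abs {m n : Type*} [Fintype m] [Fintype n]
    (A : Matrix m n ℝ) : √(∑ i, ∑ j, A i j ^ 2) ≤ ∑ i, ∑ j, |A i j| := by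
  have hsq : ∑ i, ∑ j, A i j ^ 2 ≤ (∑ i, ∑ j, |A i j|) ^ 2 :=
    calc ∑ i, ∑ j, A i j ^ 2 = ∑ i, ∑ j, |A i j| ^ 2 := by simp only [sq_abs]
      _ ≤ ∑ i, (∑ j, |A i j|) ^ 2 :=
        sum_le_sum fun i _ => sum_sq_le_sq_sum_of_nonneg fun j _ => abs_nonneg _
      _ ≤ (∑ i, ∑ j, |A i j|) ^ 2 :=
        sum_sq_le_sq_sum_of_nonneg fun i _ => sum_nonneg fun j _ => abs_nonneg _
  exact (Real.sqrt_le_sqrt hsq).trans_eq (Real.sqrt_sq (by positivity))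

theorem Matrix.inv_vandermonde {F : Type*} [Field F] {n : ℕ} {v : Fin n → F}
    (hv : Function.Injective v) :
    (vandermonde v)⁻¹ = of fun i j : Fin n => (Lagrange.basis univ v j).coeff i := by
  refine inv_eq_right_inv ?_
  ext i k
  have hdeg : (Lagrange.basis univ v k).natDegree < n := by
    rw [Lagrange.natDegree_basis hv.injOn (mem_univ k), card_univ, Fintype.card_fin]
    exact Nat.sub_lt (Fin.pos k) one_pos
  calc (vandermonde v * of fun i j : Fin n => (Lagrange.basis univ v j).coeff i) i k
      = (Lagrange.basis univ v k).eval (v i) := by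
        simp only [mul_apply, of_apply, vandermonde_apply, eval_eq_sum_range' hdeg, mul_comm]
        exact Fin.sum_univ_eq_sum_range (fun j => v i ^ j * (Lagrange.basis univ v k).coeff j) n
    _ = (1 : Matrix (Fin n) (Fin n) F) i k := by
      obtain rfl | hki := eq_or_ne i k
      · rw [Lagrange.eval_basis_self hv.injOn (mem_univ i), one_apply_eq]
      · rw [Lagrange.eval_basis_of_ne hki.symm (mem_univ i), one_apply_ne hki]

theorem Lagrange.basis_eq_C_mul_nodal_erase {F ι : Type*} [Field F] [DecidableEq ι]
    (s : Finset ι) (v : ι → F) (i : ι) :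
    Lagrange.basis s v i = C (nodalWeight s v i) * nodal (s.erase i) v := by
  simp_rw [Lagrange.basis, basisDivisor, nodalWeight, nodal, prod_mul_distrib, map_prod]

/-- `nodal s (-|v|) = ∏ (X + |v i|)`: its coefficients are the elementary symmetric functions of
the `|v i|`, which dominate those of the `v i` termwise. -/
theorem Lagrange.abs_coeff_nodal_le {ι : Type*} (s : Finset ι) (v : ι → ℝ) {k : ℕ}
    (hk : k ≤ #s) : |(nodal s v).coeff k| ≤ (nodal s fun i => -|v i|).coeff k := by
  have hneg : ∀ w : ι → ℝ, nodal s w = ∏ i ∈ s, (X + C (-w i)) := fun w => by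
    simp only [nodal, map_neg, sub_eq_add_neg]
  rw [hneg, hneg, prod_X_add_C_coeff s _ hk, prod_X_add_C_coeff s _ hk]
  refine (abs_sum_le_sum_abs _ _).trans_eq (sum_congr rfl fun t _ => ?_)
  simp only [abs_prod, abs_neg, neg_neg]

theorem Lagrange.sum_abs_coeff_nodal_le {ι : Type*} (s : Finset ι) (v : ι → ℝ) :
    ∑ k ∈ range (#s + 1), |(nodal s v).coeff k| ≤ ∏ i ∈ s, (1 + |v i|) := by
  have hdeg : (nodal s fun i => -|v i|).natDegree < #s + 1 := by
    rw [natDegree_nodal]; exact Nat.lt_succ_self _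
  calc ∑ k ∈ range (#s + 1), |(nodal s v).coeff k|
      ≤ ∑ k ∈ range (#s + 1), (nodal s fun i => -|v i|).coeff k :=
        sum_le_sum fun k hk => abs_coeff_nodal_le s v (Nat.lt_succ_iff.1 (mem_range.1 hk))
    _ = (nodal s fun i => -|v i|).eval 1 := by simp [eval_eq_sum_range' hdeg]
    _ = ∏ i ∈ s, (1 + |v i|) := by simp [eval_nodal]

theorem Lagrange.sum_abs_coeff_basis_le {ι : Type*} [DecidableEq ι] {s : Finset ι} {i : ι}
    (hi : i ∈ s) (v : ι → ℝ) :
    ∑ k ∈ range #s, |(Lagrange.basis s v i).coeff k|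
      ≤ ∏ j ∈ s.erase i, (1 + |v j|) / |v i - v j| := by
  rw [basis_eq_C_mul_nodal_erase, ← card_erase_add_one hi]
  simp_rw [coeff_C_mul, abs_mul, ← mul_sum, nodalWeight, abs_prod, abs_inv, div_eq_mul_inv,
    prod_mul_distrib, mul_comm (∏ j ∈ s.erase i, (1 + |v j|))]
  exact mul_le_mul_of_nonneg_left (sum_abs_coeff_nodal_le _ v) (by positivity)

theorem one_add_pow_div_abs_pow_sub_pow_le {q : ℝ} (hq : 1 < q) {i m : ℕ} (him : i ≠ m) :
    (1 + q ^ m) / |q ^ i - q ^ m| ≤ q / (q - 1) * (1 + q⁻¹ ^ m) * q⁻¹ ^ (i - m) := by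
  have hq1 : 0 < q - 1 := by linarith
  rcases lt_or_gt_of_ne him with hlt | hgt
  · obtain ⟨n, rfl⟩ := Nat.exists_eq_add_of_lt hlt
    have ha : 0 < q ^ i := by positivity
    have hb : 1 ≤ q ^ n := one_le_pow₀ hq.le
    have hgap : 0 < q ^ i * (q ^ n * q - 1) := mul_pos ha (by nlinarith)
    rw [Nat.sub_eq_zero_of_le (by omega), pow_zero, mul_one, inv_pow, pow_succ, pow_add,
      abs_sub_comm, abs_of_pos (by linarith), div_le_iff₀ (by linarith)]
    field_simp
    nlinarith [mul_nonneg (by positivity : 0 ≤ 1 + q ^ i * q ^ n * q) (sub_nonneg.2 hb)]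
  · obtain ⟨n, rfl⟩ := Nat.exists_eq_add_of_lt hgt
    have ha : 0 < q ^ m := by positivity
    have hb : 1 ≤ q ^ n := one_le_pow₀ hq.le
    have hgap : 0 < q ^ m * (q ^ n * q - 1) := mul_pos ha (by nlinarith)
    rw [show m + n + 1 - m = n + 1 by omega, inv_pow, inv_pow, pow_succ, pow_succ, pow_add,
      abs_of_pos (by linarith), div_le_iff₀ (by linarith)]
    field_simp
    nlinarith [mul_nonneg (by positivity : 0 ≤ (1 + q ^ m) * q) (sub_nonneg.2 hb)]

theorem prod_range_one_add_pow_le {r : ℝ} (hr0 : 0 ≤ r) (hr1 : r < 1) (n : ℕ) :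
    ∏ i ∈ range (n + 1), (1 + r ^ i) ≤ 2 * Real.exp (r / (1 - r)) := by
  rw [prod_range_eq_mul_Ico _ n.succ_pos, pow_zero, one_add_one_eq_two]
  gcongr
  calc ∏ i ∈ Ico 1 (n + 1), (1 + r ^ i) ≤ ∏ i ∈ Ico 1 (n + 1), Real.exp (r ^ i) :=
        prod_le_prod (fun i _ => by positivity) fun i _ => by
          linarith [Real.add_one_le_exp (r ^ i)]
    _ = Real.exp (∑ i ∈ Ico 1 (n + 1), r ^ i) := (Real.exp_sum _ _).symm
    _ ≤ Real.exp (r / (1 - r)) := by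
        gcongr; simpa using geom_sum_Ico_le_of_lt_one (m := 1) (n := n + 1) hr0 hr1

theorem sum_range_pow_div_one_add_pow_le {r : ℝ} (hr0 : 0 ≤ r) (hr1 : r < 1) (n : ℕ) :
    ∑ i ∈ range (n + 1), r ^ i / (1 + r ^ i) ≤ 1 / 2 + r / (1 - r) := by
  rw [sum_range_eq_add_Ico _ n.succ_pos, pow_zero, one_add_one_eq_two]
  gcongr
  calc ∑ i ∈ Ico 1 (n + 1), r ^ i / (1 + r ^ i) ≤ ∑ i ∈ Ico 1 (n + 1), r ^ i :=
        sum_le_sum fun i _ => div_le_self (by positivity) (by linarith [pow_nonneg hr0 i])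
    _ ≤ r / (1 - r) := by simpa using geom_sum_Ico_le_of_lt_one (m := 1) (n := n + 1) hr0 hr1

theorem prod_erase_one_add_abs_pow_div_le {q : ℝ} (hq : 1 < q) {K : ℕ} (i : Fin (K + 1)) :
    ∏ m ∈ univ.erase i, (1 + |q ^ (m : ℕ)|) / |q ^ (i : ℕ) - q ^ (m : ℕ)|
      ≤ (q / (q - 1)) ^ K *
        ((∏ m : Fin (K + 1), (1 + q⁻¹ ^ (m : ℕ))) * (q⁻¹ ^ (i : ℕ) / (1 + q⁻¹ ^ (i : ℕ)))) := by
  have hr0 : 0 ≤ q⁻¹ := by positivity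
  have hr1 : q⁻¹ ≤ 1 := inv_le_one_of_one_le₀ hq.le
  -- the factor `m = 0` alone contributes `q⁻¹ ^ i`
  have hexp : (i : ℕ) ≤ ∑ m ∈ univ.erase i, ((i : ℕ) - m) := by
    rcases eq_or_ne i 0 with rfl | hi
    · simp
    · simpa using single_le_sum (f := fun m : Fin (K + 1) => (i : ℕ) - m)
        (fun _ _ => Nat.zero_le _) (mem_erase.2 ⟨hi.symm, mem_univ 0⟩)
  calc ∏ m ∈ univ.erase i, (1 + |q ^ (m : ℕ)|) / |q ^ (i : ℕ) - q ^ (m : ℕ)|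
      ≤ ∏ m ∈ univ.erase i, (q / (q - 1) * (1 + q⁻¹ ^ (m : ℕ)) * q⁻¹ ^ ((i : ℕ) - m)) := by
        refine prod_le_prod (fun m _ => by positivity) fun m hm => ?_
        rw [abs_of_pos (by positivity)]
        exact one_add_pow_div_abs_pow_sub_pow_le hq (Fin.val_ne_of_ne (ne_of_mem_erase hm).symm)
    _ = (q / (q - 1)) ^ K * ((∏ m ∈ univ.erase i, (1 + q⁻¹ ^ (m : ℕ))) *
          q⁻¹ ^ ∑ m ∈ univ.erase i, ((i : ℕ) - m)) := by
        rw [prod_mul_distrib, prod_mul_distrib, prod_const, prod_pow_eq_pow_sum,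
          card_erase_of_mem (mem_univ i), card_univ, Fintype.card_fin, Nat.add_sub_cancel,
          mul_assoc]
    _ ≤ (q / (q - 1)) ^ K * ((∏ m ∈ univ.erase i, (1 + q⁻¹ ^ (m : ℕ))) * q⁻¹ ^ (i : ℕ)) := by
        gcongr _ * (_ * ?_)
        exact pow_le_pow_of_le_one hr0 hr1 hexp
    _ = _ := by
        rw [← prod_erase_mul _ _ (mem_univ i), mul_assoc _ (1 + _),
          mul_div_cancel₀ _ (by positivity : 1 + q⁻¹ ^ (i : ℕ) ≠ 0)]

theorem sum_prod_erase_one_add_abs_pow_div_le {q : ℝ} (hq : 1 < q) (K : ℕ) :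
    ∑ i : Fin (K + 1), ∏ m ∈ univ.erase i, (1 + |q ^ (m : ℕ)|) / |q ^ (i : ℕ) - q ^ (m : ℕ)|
      ≤ (q / (q - 1)) ^ K * (Real.exp (q - 1)⁻¹ * (1 + 2 * (q - 1)⁻¹)) := by
  have hr0 : 0 ≤ q⁻¹ := by positivity
  have hr1 : q⁻¹ < 1 := inv_lt_one_of_one_lt₀ hq
  have hu : q⁻¹ / (1 - q⁻¹) = (q - 1)⁻¹ := by
    have : q ≠ 0 := by positivity
    field_simp
  have hprod := prod_range_one_add_pow_le hr0 hr1 K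
  have hsum := sum_range_pow_div_one_add_pow_le hr0 hr1 K
  rw [hu, ← Fin.prod_univ_eq_prod_range] at hprod
  rw [hu, ← Fin.sum_univ_eq_sum_range] at hsum
  calc _ ≤ ∑ i : Fin (K + 1), (q / (q - 1)) ^ K *
          ((∏ m : Fin (K + 1), (1 + q⁻¹ ^ (m : ℕ))) * (q⁻¹ ^ (i : ℕ) / (1 + q⁻¹ ^ (i : ℕ)))) :=
        sum_le_sum fun i _ => prod_erase_one_add_abs_pow_div_le hq i
    _ = (q / (q - 1)) ^ K * ((∏ m : Fin (K + 1), (1 + q⁻¹ ^ (m : ℕ))) *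
          ∑ i : Fin (K + 1), q⁻¹ ^ (i : ℕ) / (1 + q⁻¹ ^ (i : ℕ))) := by
        rw [mul_sum, mul_sum]
    _ ≤ (q / (q - 1)) ^ K * (2 * Real.exp (q - 1)⁻¹ * (1 / 2 + (q - 1)⁻¹)) := by
        gcongr
    _ = _ := by ring

theorem Real.exp_mul_one_add_two_mul_le (u : ℝ) :
    Real.exp u * (1 + 2 * u) ≤ 2 * Real.exp (2 * Real.exp 1 * u ^ 2) := by
  have hquad : 3 * u ≤ Real.log 2 + 2 * Real.exp 1 * u ^ 2 := by
    nlinarith [Real.log_two_gt_d9, Real.exp_one_gt_d9, sq_nonneg (4 * Real.exp 1 * u - 3)]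
  calc Real.exp u * (1 + 2 * u) ≤ Real.exp u * Real.exp (2 * u) := by
        gcongr; linarith [Real.add_one_le_exp (2 * u)]
    _ = Real.exp (3 * u) := by rw [← Real.exp_add]; ring_nf
    _ ≤ Real.exp (Real.log 2 + 2 * Real.exp 1 * u ^ 2) := Real.exp_le_exp.2 hquad
    _ = 2 * Real.exp (2 * Real.exp 1 * u ^ 2) := by
        rw [Real.exp_add, Real.exp_log two_pos]

theorem Psi_eq_vandermonde (t : ℝ) (K : ℕ) :
    Psi t K = vandermonde fun i : Fin (K + 1) => Real.exp t ^ (i : ℕ) := by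
  ext i j
  rw [Psi, of_apply, vandermonde_apply, ← pow_mul, ← Real.exp_nat_mul]
  push_cast
  ring_nf

theorem Psi_inv_frobenius_norm_le (t : ℝ) (ht : 0 < t) (K : ℕ) (hK : 1 ≤ K) :
    Real.sqrt (∑ i : Fin (K + 1), ∑ j : Fin (K + 1), ((Psi t K)⁻¹ i j) ^ 2)
      ≤ (Real.exp (-2 * Real.exp 1 / (Real.exp t - 1) ^ 2))⁻¹ *
          (K : ℝ) * ((K : ℝ) + 1) * (Real.exp t / (Real.exp t - 1)) ^ K := by
  set q := Real.exp t
  have hq : 1 < q := Real.one_lt_exp_iff.2 ht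
  have hinj : Function.Injective fun i : Fin (K + 1) => q ^ (i : ℕ) :=
    (pow_right_strictMono₀ hq).injective.comp Fin.val_injective
  have hC : (Real.exp (-2 * Real.exp 1 / (q - 1) ^ 2))⁻¹
      = Real.exp (2 * Real.exp 1 * (q - 1)⁻¹ ^ 2) := by
    rw [← Real.exp_neg, inv_pow]; ring_nf
  have hKK : (2 : ℝ) ≤ K * (K + 1) := by
    have : (1 : ℝ) ≤ K := by exact_mod_cast hK
    nlinarith
  calc _ ≤ ∑ i : Fin (K + 1), ∑ j : Fin (K + 1), |(Psi t K)⁻¹ i j| :=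
        sqrt_sum_sum_sq_le_sum_sum_abs _
    _ = ∑ j : Fin (K + 1), ∑ k ∈ range #(univ : Finset (Fin (K + 1))),
          |(Lagrange.basis univ (fun i : Fin (K + 1) => q ^ (i : ℕ)) j).coeff k| := by
        rw [Psi_eq_vandermonde, inv_vandermonde hinj, sum_comm, card_univ, Fintype.card_fin]
        simp only [of_apply]
        exact sum_congr rfl fun j _ =>
          Fin.sum_univ_eq_sum_range (fun k => |(Lagrange.basis _ _ j).coeff k|) _
    _ ≤ ∑ j : Fin (K + 1), ∏ m ∈ univ.erase j,
          (1 + |q ^ (m : ℕ)|) / |q ^ (j : ℕ) - q ^ (m : ℕ)| :=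
        sum_le_sum fun j _ => Lagrange.sum_abs_coeff_basis_le (mem_univ j) _
    _ ≤ (q / (q - 1)) ^ K * (Real.exp (q - 1)⁻¹ * (1 + 2 * (q - 1)⁻¹)) :=
        sum_prod_erase_one_add_abs_pow_div_le hq K
    _ ≤ (q / (q - 1)) ^ K * (K * (K + 1) * Real.exp (2 * Real.exp 1 * (q - 1)⁻¹ ^ 2)) := by
        have : 0 < q - 1 := by linarith
        gcongr _ * ?_
        exact (Real.exp_mul_one_add_two_mul_le _).trans (by gcongr)
    _ = _ := by rw [hC]; ring
end
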